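/- arXiv:2408.17283 — 3 statements merged into one kernel-verified Lean document; each statement's English description precedes it below -/
import Mathlib

section
/- Fibonacci seesaw recurrence: the deterministic query complexity of Sink-or-Clash satisfies t(n) ≤ 2 + Σ_{k=0}^{n−2} t(k) for n ≥ 1; consequently t(n) ∈ O(1.62^n). -/
abbrev Vtx (n : ℕ) := Fin n → Bool

/-- Run a deterministic query strategy `A` for `k` steps against outmap `s`,
recording the queried vertices together with their revealed outmap values. -/
def runAlg {n : ℕ} (s : Vtx n → Vtx n) (A : List (Vtx n × Vtx n) → Vtx n) :
    ℕ → List (Vtx n × Vtx n)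
  | 0 => []
  | k + 1 =>
      runAlg s A k ++ [(A (runAlg s A k), s (A (runAlg s A k)))]

/-- The history `qs` contains a solution of Sink-or-Clash: a queried sink, or a
queried clashing pair. -/
def FoundSolution {n : ℕ} (s : Vtx n → Vtx n) (qs : List (Vtx n × Vtx n)) : Prop :=
  (∃ u, (u, s u) ∈ qs ∧ s u = fun _ => false) ∨
  (∃ u v, (u, s u) ∈ qs ∧ (v, s v) ∈ qs ∧ u ≠ v ∧ ∀ i, u i ≠ v i → s u i = s v i)

/-- Some deterministic strategy solves Sink-or-Clash on the `n`-cube within `k`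
queries on every outmap. -/
def SolvesSinkOrClash (n k : ℕ) : Prop :=
  ∃ A : List (Vtx n × Vtx n) → Vtx n, ∀ s : Vtx n → Vtx n, FoundSolution s (runAlg s A k)

/-- `t n`: deterministic query complexity of Sink-or-Clash. -/
noncomputable def tQC (n : ℕ) : ℕ := sInf {k | SolvesSinkOrClash n k}

attribute [local instance] Classical.propDecidable

lemma foundSolution_mono {n} {s : Vtx n → Vtx n} {l l' : List (Vtx n × Vtx n)}
    (h : ∀ p ∈ l, p ∈ l') (hf : FoundSolution s l) : FoundSolution s l' := by
  rcases hf with ⟨u, hu, hsu⟩ | ⟨u, v, hu, hv, huv, hc⟩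
  · exact Or.inl ⟨u, h _ hu, hsu⟩
  · exact Or.inr ⟨u, v, h _ hu, h _ hv, huv, hc⟩

inductive Strat (n : ℕ) : Type where
  | ret : Strat n
  | ask (q : Vtx n) (f : Vtx n → Strat n) : Strat n

namespace Strat

variable {n : ℕ}

def trace (s : Vtx n → Vtx n) : Strat n → List (Vtx n × Vtx n)
  | .ret => []
  | .ask q f => (q, s q) :: (f (s q)).trace s

inductive CostLe {n : ℕ} : Strat n → ℕ → Prop where
  | ret (k) : CostLe .ret k
  | ask (q f k) : (∀ a, CostLe (f a) k) → CostLe (.ask q f) (k + 1)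

lemma CostLe.weaken {T : Strat n} {k m : ℕ} (h : CostLe T k) (hkm : k ≤ m) :
    CostLe T m := by
  induction h generalizing m with
  | ret => exact .ret m
  | ask q f k h ih =>
    cases m with
    | zero => omega
    | succ m' => exact .ask q f m' (fun a => ih a (by omega))

lemma trace_snd {s : Vtx n → Vtx n} : ∀ (T : Strat n), ∀ p ∈ T.trace s, p.2 = s p.1 := by
  intro T
  induction T with
  | ret => intro p hp; simp [trace] at hp
  | ask q f ih =>
    intro p hp
    rcases List.mem_cons.1 hp with h | h
    · subst h; rfl
    · exact ih (s q) p h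

def replay : Strat n → List (Vtx n × Vtx n) → Vtx n
  | .ret, _ => fun _ => false
  | .ask q _, [] => q
  | .ask _ f, p :: rest => (f p.2).replay rest

def nq (s : Vtx n → Vtx n) : Strat n → ℕ → Vtx n
  | .ret, _ => fun _ => false
  | .ask q _, 0 => q
  | .ask q f, j + 1 => (f (s q)).nq s j

def ptrace (s : Vtx n → Vtx n) : Strat n → ℕ → List (Vtx n × Vtx n)
  | _, 0 => []
  | .ret, j + 1 => ((fun _ => false), s (fun _ => false)) :: Strat.ptrace s .ret j
  | .ask q f, j + 1 => (q, s q) :: (f (s q)).ptrace s j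

lemma replay_ptrace (s : Vtx n → Vtx n) :
    ∀ (j : ℕ) (T : Strat n), T.replay (T.ptrace s j) = T.nq s j := by
  intro j
  induction j with
  | zero => intro T; cases T <;> rfl
  | succ j ih =>
    intro T
    cases T with
    | ret => rfl
    | ask q f => exact ih (f (s q))

lemma ptrace_ret (s : Vtx n → Vtx n) :
    ∀ j, Strat.ptrace s (.ret : Strat n) j
      = List.replicate j ((fun _ => false), s (fun _ => false)) := by
  intro j
  induction j with
  | zero => rfl
  | succ j ih => show _ :: _ = _; rw [ih, List.replicate_succ]

lemma ptrace_zero (s : Vtx n → Vtx n) (T : Strat n) : T.ptrace s 0 = [] := by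
  cases T <;> rfl

lemma ptrace_succ (s : Vtx n → Vtx n) :
    ∀ (j : ℕ) (T : Strat n),
      T.ptrace s (j + 1) = T.ptrace s j ++ [(T.nq s j, s (T.nq s j))] := by
  intro j
  induction j with
  | zero => intro T; cases T <;> simp [ptrace, nq]
  | succ j ih =>
    intro T
    cases T with
    | ret =>
      show (_ :: Strat.ptrace s .ret (j+1)) = _
      have hnq : nq s (.ret : Strat n) (j+1) = fun _ => false := rfl
      rw [ptrace_ret, hnq, ← List.replicate_succ, ← List.replicate_succ']
    | ask q f =>
      show (_ :: (f (s q)).ptrace s (j+1)) = _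
      rw [ih (f (s q))]
      simp [ptrace, nq]

lemma runAlg_replay (s : Vtx n → Vtx n) (T : Strat n) :
    ∀ j, runAlg s T.replay j = T.ptrace s j := by
  intro j
  induction j with
  | zero => rw [ptrace_zero]; rfl
  | succ j ih =>
    show runAlg s T.replay j ++ _ = _
    rw [ih, replay_ptrace, ptrace_succ]

lemma trace_subset_ptrace {s : Vtx n → Vtx n} {T : Strat n} {m : ℕ} (h : CostLe T m) :
    ∀ p ∈ T.trace s, p ∈ T.ptrace s m := by
  induction h with
  | ret => intro p hp; simp [trace] at hp
  | ask q f k h ih =>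
    intro p hp
    rcases List.mem_cons.1 hp with h' | h'
    · subst h'; exact List.mem_cons_self
    · exact List.mem_cons_of_mem _ (ih (s q) p h')

lemma solves_of_strat {T : Strat n} {m : ℕ} (hc : CostLe T m)
    (h : ∀ s, FoundSolution s (T.trace s)) : SolvesSinkOrClash n m := by
  refine ⟨T.replay, fun s => ?_⟩
  rw [runAlg_replay]
  exact foundSolution_mono (trace_subset_ptrace hc) (h s)

def bind : Strat n → (List (Vtx n × Vtx n) → Strat n) → Strat n
  | .ret, g => g []
  | .ask q f, g => .ask q fun a => (f a).bind (fun l => g ((q, a) :: l))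

lemma trace_bind (s : Vtx n → Vtx n) :
    ∀ (T : Strat n) (g : List (Vtx n × Vtx n) → Strat n),
      (T.bind g).trace s = T.trace s ++ (g (T.trace s)).trace s := by
  intro T
  induction T with
  | ret => intro g; rfl
  | ask q f ih =>
    intro g
    show (q, s q) :: ((f (s q)).bind _).trace s = _
    rw [ih (s q)]
    rfl

lemma cost_bind {T : Strat n} {a : ℕ} (h : CostLe T a)
    {g : List (Vtx n × Vtx n) → Strat n} {b : ℕ} (hg : ∀ l, CostLe (g l) b) :
    CostLe (T.bind g) (a + b) := by
  induction h generalizing g with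
  | ret k => exact (hg []).weaken (by omega)
  | ask q f k h ih =>
    show CostLe (.ask q _) (k + 1 + b)
    have : k + 1 + b = (k + b) + 1 := by omega
    rw [this]
    exact .ask _ _ _ (fun a => ih a (fun l => hg _))

end Strat

def ofAlg {n : ℕ} (A : List (Vtx n × Vtx n) → Vtx n) : ℕ → List (Vtx n × Vtx n) → Strat n
  | 0, _ => .ret
  | m + 1, h => .ask (A h) fun a => ofAlg A m (h ++ [(A h, a)])

lemma ofAlg_cost {n : ℕ} (A : List (Vtx n × Vtx n) → Vtx n) :
    ∀ m h, Strat.CostLe (ofAlg A m h) m := by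
  intro m
  induction m with
  | zero => intro h; exact .ret 0
  | succ m ih => intro h; exact .ask _ _ _ (fun a => ih _)

lemma ofAlg_trace {n : ℕ} (s : Vtx n → Vtx n) (A : List (Vtx n × Vtx n) → Vtx n) :
    ∀ m j, runAlg s A (j + m) = runAlg s A j ++ (ofAlg A m (runAlg s A j)).trace s := by
  intro m
  induction m with
  | zero => intro j; simp [ofAlg, Strat.trace]
  | succ m ih =>
    intro j
    have h1 : runAlg s A j ++ [(A (runAlg s A j), s (A (runAlg s A j)))] = runAlg s A (j+1) := rfl
    show runAlg s A (j + (m+1)) = runAlg s A j ++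
      ((A (runAlg s A j), s (A (runAlg s A j))) ::
        (ofAlg A m (runAlg s A j ++ [(A (runAlg s A j), s (A (runAlg s A j)))])).trace s)
    rw [h1]
    have h2 : j + (m + 1) = (j + 1) + m := by omega
    rw [h2, ih (j+1), ← h1]
    simp

lemma ofAlg_trace₀ {n : ℕ} (s : Vtx n → Vtx n) (A : List (Vtx n × Vtx n) → Vtx n) (m : ℕ) :
    runAlg s A m = (ofAlg A m []).trace s := by
  have := ofAlg_trace s A m 0
  simpa [runAlg] using this

section Embed

variable {n : ℕ} (S : Finset (Fin n)) (base : Vtx n)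

/-- order iso onto the face coordinates -/
noncomputable def sigF (a : Fin S.card) : Fin n := (S.orderIsoOfFin rfl a : Fin n)

lemma sigF_mem (a : Fin S.card) : sigF S a ∈ S := (S.orderIsoOfFin rfl a).2

noncomputable def embV (x : Vtx S.card) : Vtx n :=
  fun j => if h : j ∈ S then x ((S.orderIsoOfFin rfl).symm ⟨j, h⟩) else base j

noncomputable def subM (s : Vtx n → Vtx n) (x : Vtx S.card) : Vtx S.card :=
  fun a => s (embV S base x) (sigF S a)

lemma embV_not_mem {j : Fin n} (h : j ∉ S) (x : Vtx S.card) : embV S base x j = base j :=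
  dif_neg h

lemma embV_mem {j : Fin n} (h : j ∈ S) (x : Vtx S.card) :
    embV S base x j = x ((S.orderIsoOfFin rfl).symm ⟨j, h⟩) :=
  dif_pos h

lemma embV_sigF (x : Vtx S.card) (a : Fin S.card) : embV S base x (sigF S a) = x a := by
  rw [embV_mem S base (sigF_mem S a)]
  congr 1
  have : (⟨sigF S a, sigF_mem S a⟩ : {y // y ∈ S}) = S.orderIsoOfFin rfl a := rfl
  rw [this, OrderIso.symm_apply_apply]

lemma sigF_inv {j : Fin n} (h : j ∈ S) :
    sigF S ((S.orderIsoOfFin rfl).symm ⟨j, h⟩) = j := by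
  show ((S.orderIsoOfFin rfl) ((S.orderIsoOfFin rfl).symm ⟨j, h⟩) : Fin n) = j
  rw [OrderIso.apply_symm_apply]

/-- sink of the face: outmap vanishes on all coordinates in S -/
lemma face_sink {s : Vtx n → Vtx n} {x : Vtx S.card}
    (h : subM S base s x = fun _ => false) :
    ∀ j ∈ S, s (embV S base x) j = false := by
  intro j hj
  have := congrFun h ((S.orderIsoOfFin rfl).symm ⟨j, hj⟩)
  rwa [subM, sigF_inv S hj] at this

end Embed

namespace Strat

noncomputable def embed {n : ℕ} (S : Finset (Fin n)) (base : Vtx n) :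
    Strat S.card → Strat n
  | .ret => .ret
  | .ask q f => .ask (embV S base q)
      (fun a => (f (fun b => a (sigF S b))).embed S base)

lemma embed_cost {n : ℕ} (S : Finset (Fin n)) (base : Vtx n)
    {T : Strat S.card} {m : ℕ} (h : CostLe T m) : CostLe (T.embed S base) m := by
  induction h with
  | ret k => exact .ret k
  | ask q f k h ih => exact .ask _ _ _ (fun a => ih _)

lemma embed_trace {n : ℕ} (S : Finset (Fin n)) (base : Vtx n) (s : Vtx n → Vtx n) :
    ∀ T : Strat S.card,
      (T.embed S base).trace s
        = (T.trace (subM S base s)).map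
            (fun p => (embV S base p.1, s (embV S base p.1))) := by
  intro T
  induction T with
  | ret => rfl
  | ask q f ih =>
    show (embV S base q, s (embV S base q)) :: _ = _
    have hq : (fun b => s (embV S base q) (sigF S b)) = subM S base s q := rfl
    rw [Strat.trace]
    show (embV S base q, s (embV S base q)) ::
        ((f (fun b => s (embV S base q) (sigF S b))).embed S base).trace s = _
    rw [hq, ih (subM S base s q)]
    rfl

end Strat

/-- Every map has a sink or a clash (key: a clash-free map is a USO outmap whose
restriction to a facet is clash-free; its facet sinks produce a global sink). -/
lemma exists_solution : ∀ (n : ℕ) (s : Vtx n → Vtx n),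
    (∃ u, s u = fun _ => false) ∨
      (∃ u v : Vtx n, u ≠ v ∧ ∀ i, u i ≠ v i → s u i = s v i) := by
  intro n
  induction n with
  | zero =>
    intro s
    left
    exact ⟨fun _ => false, funext fun i => i.elim0⟩
  | succ n ih =>
    intro s
    set d := Fin.last n
    have lift_clash : ∀ (b : Bool) (x y : Vtx n), x ≠ y →
        (∀ a : Fin n, x a ≠ y a →
          s (Fin.snoc x b) a.castSucc = s (Fin.snoc y b) a.castSucc) →
        (∃ u v : Vtx (n+1), u ≠ v ∧ ∀ i, u i ≠ v i → s u i = s v i) := by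
      intro b x y hxy hcl
      refine ⟨Fin.snoc x b, Fin.snoc y b, ?_, ?_⟩
      · intro h
        apply hxy
        funext a
        have := congrFun h a.castSucc
        simpa [Fin.snoc_castSucc] using this
      · intro i hi
        induction i using Fin.lastCases with
        | last => simp [Fin.snoc_last] at hi
        | cast a =>
          apply hcl
          simpa [Fin.snoc_castSucc] using hi
    have key : ∀ b : Bool,
        (∃ w : Vtx n, ∀ a : Fin n, s (Fin.snoc w b) a.castSucc = false) ∨
        (∃ u v : Vtx (n+1), u ≠ v ∧ ∀ i, u i ≠ v i → s u i = s v i) := by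
      intro b
      rcases ih (fun x (a : Fin n) => s (Fin.snoc x b) a.castSucc) with ⟨w, hw⟩ | ⟨x, y, hxy, hcl⟩
      · exact Or.inl ⟨w, fun a => congrFun hw a⟩
      · exact Or.inr (lift_clash b x y hxy hcl)
    rcases key false with ⟨wf, hwf⟩ | hcl
    · rcases key true with ⟨wt, hwt⟩ | hcl
      · by_cases hf : s (Fin.snoc wf false) d = false
        · left
          refine ⟨Fin.snoc wf false, funext fun i => ?_⟩
          induction i using Fin.lastCases with
          | last => exact hf
          | cast a => exact hwf a
        · by_cases ht : s (Fin.snoc wt true) d = false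
          · left
            refine ⟨Fin.snoc wt true, funext fun i => ?_⟩
            induction i using Fin.lastCases with
            | last => exact ht
            | cast a => exact hwt a
          · right
            refine ⟨Fin.snoc wf false, Fin.snoc wt true, ?_, ?_⟩
            · intro h
              have := congrFun h d
              simp [d, Fin.snoc_last] at this
            · intro i hi
              induction i using Fin.lastCases with
              | last =>
                rw [Bool.not_eq_false] at hf ht
                rw [hf, ht]
              | cast a => rw [hwf a, hwt a]
      · exact Or.inr hcl
    · exact Or.inr hcl

/-- the trivial enumeration strategy -/
def allStrat {n : ℕ} : List (Vtx n) → Strat n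
  | [] => .ret
  | q :: qs => .ask q (fun _ => allStrat qs)

lemma allStrat_cost {n : ℕ} : ∀ L : List (Vtx n), Strat.CostLe (allStrat L) L.length := by
  intro L
  induction L with
  | nil => exact .ret 0
  | cons q qs ih => exact .ask _ _ _ (fun _ => ih)

lemma allStrat_trace {n : ℕ} (s : Vtx n → Vtx n) :
    ∀ L : List (Vtx n), (allStrat L).trace s = L.map (fun q => (q, s q)) := by
  intro L
  induction L with
  | nil => rfl
  | cons q qs ih => show (q, s q) :: _ = _; rw [ih]; rfl

lemma solves_card (n : ℕ) :
    SolvesSinkOrClash n (Finset.univ : Finset (Vtx n)).toList.length := by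
  refine Strat.solves_of_strat (allStrat_cost _) (fun s => ?_)
  have hmem : ∀ u : Vtx n,
      (u, s u) ∈ (allStrat (Finset.univ : Finset (Vtx n)).toList).trace s := by
    intro u
    rw [allStrat_trace]
    exact List.mem_map_of_mem (Finset.mem_toList.2 (Finset.mem_univ u))
  rcases exists_solution n s with ⟨u, hu⟩ | ⟨u, v, huv, hcl⟩
  · exact Or.inl ⟨u, hmem u, hu⟩
  · exact Or.inr ⟨u, v, hmem u, hmem v, huv, hcl⟩

lemma solvable (n : ℕ) : {k | SolvesSinkOrClash n k}.Nonempty :=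
  ⟨_, solves_card n⟩

lemma tQC_solves (n : ℕ) : SolvesSinkOrClash n (tQC n) := Nat.sInf_mem (solvable n)

lemma tQC_zero_le : tQC 0 ≤ 1 := by
  have h := Nat.sInf_le (Set.mem_setOf.2 (solves_card 0))
  have hlen : (Finset.univ : Finset (Vtx 0)).toList.length = 1 := by
    rw [Finset.length_toList, Finset.card_univ]
    simp
  rw [hlen] at h
  exact h

section Seesaw

variable {n : ℕ}

/-- One growth step: search for the sink of the translated face. -/
noncomputable def body (B : ∀ k, List (Vtx k × Vtx k) → Vtx k)
    (rec : Finset (Fin n) → Vtx n → Vtx n → Vtx n → Vtx n → Strat n)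
    (S : Finset (Fin n)) (i : Fin n) (u fu v fv : Vtx n) : Strat n :=
  ((ofAlg (B S.card) (tQC S.card) []).embed S (Function.update u i (!(u i)))).bind
    fun l =>
      if hp : ∃ p ∈ l, (∀ j ∈ S, p.2 j = false) ∧ p.2 i = false then
        rec (insert i S) hp.choose.1 hp.choose.2 v fv
      else .ret

/-- The seesaw loop. -/
noncomputable def loop (B : ∀ k, List (Vtx k × Vtx k) → Vtx k) :
    ℕ → Finset (Fin n) → Vtx n → Vtx n → Vtx n → Vtx n → Strat n
  | 0, _, _, _, _, _ => .ret
  | c + 1, S, u, fu, v, fv =>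
    if h : ∃ i, i ∉ S ∧ fu i ≠ fv i then
      if fu h.choose = true then body B (loop B c) S h.choose u fu v fv
      else body B (loop B c) S h.choose v fv u fu
    else .ret

lemma body_cost (B : ∀ k, List (Vtx k × Vtx k) → Vtx k)
    (rec : Finset (Fin n) → Vtx n → Vtx n → Vtx n → Vtx n → Strat n)
    (S : Finset (Fin n)) (i : Fin n) (u fu v fv : Vtx n) (b : ℕ)
    (hrec : ∀ w fw, Strat.CostLe (rec (insert i S) w fw v fv) b) :
    Strat.CostLe (body B rec S i u fu v fv) (tQC S.card + b) := by
  refine Strat.cost_bind (Strat.embed_cost _ _ (ofAlg_cost _ _ _)) (fun l => ?_)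
  by_cases hp : ∃ p ∈ l, (∀ j ∈ S, p.2 j = false) ∧ p.2 i = false
  · rw [dif_pos hp]; exact hrec _ _
  · rw [dif_neg hp]; exact .ret b

lemma loop_cost (B : ∀ k, List (Vtx k × Vtx k) → Vtx k) :
    ∀ (c : ℕ) (S : Finset (Fin n)) (u fu v fv : Vtx n),
      Strat.CostLe (loop B c S u fu v fv) (∑ j ∈ Finset.range c, tQC (S.card + j)) := by
  intro c
  induction c with
  | zero => intro S u fu v fv; exact .ret _
  | succ c ih =>
    intro S u fu v fv
    have hsum : (∑ j ∈ Finset.range (c + 1), tQC (S.card + j))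
        = tQC S.card + ∑ j ∈ Finset.range c, tQC (S.card + 1 + j) := by
      rw [Finset.sum_range_succ']
      have : ∀ j ∈ Finset.range c, tQC (S.card + (j + 1)) = tQC (S.card + 1 + j) := by
        intro j _; congr 1; omega
      rw [Finset.sum_congr rfl this, Nat.add_comm]
      congr 1
    rw [hsum]
    show Strat.CostLe (if h : ∃ i, i ∉ S ∧ fu i ≠ fv i then _ else _) _
    by_cases h : ∃ i, i ∉ S ∧ fu i ≠ fv i
    · rw [dif_pos h]
      have hcard : (insert h.choose S).card = S.card + 1 :=
        Finset.card_insert_of_notMem h.choose_spec.1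
      by_cases hui : fu h.choose = true
      · rw [if_pos hui]
        refine body_cost B _ S h.choose u fu v fv _ (fun w fw => ?_)
        have := ih (insert h.choose S) w fw v fv
        rwa [hcard] at this
      · rw [if_neg hui]
        refine body_cost B _ S h.choose v fv u fu _ (fun w fw => ?_)
        have := ih (insert h.choose S) w fw u fu
        rwa [hcard] at this
    · rw [dif_neg h]; exact .ret _

end Seesaw

lemma exists_not_mem_of_card_lt {n : ℕ} {S : Finset (Fin n)} (h : S.card < n) :
    ∃ i, i ∉ S := by
  by_contra hc
  push_neg at hc
  have hS : S = Finset.univ := Finset.eq_univ_iff_forall.2 hc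
  rw [hS, Finset.card_univ, Fintype.card_fin] at h
  omega

lemma body_spec {n : ℕ} (B : ∀ k, List (Vtx k × Vtx k) → Vtx k)
    (hB : ∀ (k : ℕ) (s : Vtx k → Vtx k), FoundSolution s (runAlg s (B k) (tQC k)))
    (s : Vtx n → Vtx n) (c : ℕ)
    (IH : ∀ (S : Finset (Fin n)) (u v : Vtx n) (pre : List (Vtx n × Vtx n)),
      c + S.card + 1 = n →
      (u, s u) ∈ pre → (v, s v) ∈ pre →
      (∀ j ∈ S, s u j = false) → (∀ j ∈ S, s v j = false) →
      (∀ i, i ∉ S → u i ≠ v i) →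
      FoundSolution s (pre ++ (loop B c S u (s u) v (s v)).trace s))
    (S : Finset (Fin n)) (i : Fin n) (u v : Vtx n) (pre : List (Vtx n × Vtx n))
    (hcard : c + (S.card + 1) + 1 = n) (hi : i ∉ S)
    (hu : (u, s u) ∈ pre) (hv : (v, s v) ∈ pre)
    (hsu : ∀ j ∈ S, s u j = false) (hsv : ∀ j ∈ S, s v j = false)
    (hanti : ∀ j, j ∉ S → u j ≠ v j)
    (hui : s u i = true) (hvi : s v i = false) :
    FoundSolution s (pre ++ (body B (loop B c) S i u (s u) v (s v)).trace s) := by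
  simp only [body, Strat.trace_bind]
  set base := Function.update u i (!(u i)) with hbase
  set s' := subM S base s with hs'
  set T0 := ofAlg (B S.card) (tQC S.card) ([] : List (Vtx S.card × Vtx S.card)) with hT0
  set L := (T0.embed S base).trace s with hL
  have hLmap : L = (T0.trace s').map (fun p => (embV S base p.1, s (embV S base p.1))) :=
    Strat.embed_trace S base s T0
  have hsub : FoundSolution s' (T0.trace s') := by
    rw [hT0, ← ofAlg_trace₀]
    exact hB S.card s'
  have hmemL : ∀ x : Vtx S.card, (x, s' x) ∈ T0.trace s' →
      (embV S base x, s (embV S base x)) ∈ L := by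
    intro x hx
    rw [hLmap]
    exact List.mem_map_of_mem hx
  have hbase_i : base i = !(u i) := Function.update_self i _ u
  have hbase_ne : ∀ j, j ≠ i → base j = u j := fun j hj => Function.update_of_ne hj _ _
  have hLfst : ∀ p ∈ L, ∀ j, j ∉ S → p.1 j = base j := by
    intro p hp j hj
    rw [hLmap] at hp
    rcases List.mem_map.1 hp with ⟨q, _, rfl⟩
    exact embV_not_mem S base hj q.1
  have hLsnd : ∀ p ∈ L, p.2 = s p.1 := Strat.trace_snd _
  by_cases hp : ∃ p ∈ L, (∀ j ∈ S, p.2 j = false) ∧ p.2 i = false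
  · rw [dif_pos hp]
    obtain ⟨hpmem, hpsink, hpi⟩ := hp.choose_spec
    have hps : hp.choose.2 = s hp.choose.1 := hLsnd _ hpmem
    rw [hps]
    have hgoal := IH (insert i S) hp.choose.1 v (pre ++ L)
      (by rw [Finset.card_insert_of_notMem hi]; omega)
      (by refine List.mem_append_right _ ?_; rw [← hps]; exact hpmem)
      (List.mem_append_left _ hv)
      (by
        intro j hj
        rcases Finset.mem_insert.1 hj with rfl | hjS
        · rw [← hps]; exact hpi
        · rw [← hps]; exact hpsink j hjS)
      (by
        intro j hj
        rcases Finset.mem_insert.1 hj with rfl | hjS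
        · exact hvi
        · exact hsv j hjS)
      (by
        intro j hj
        rw [Finset.mem_insert] at hj
        push_neg at hj
        rw [hLfst _ hpmem j hj.2, hbase_ne j hj.1]
        exact hanti j hj.2)
    rw [List.append_assoc] at hgoal
    exact hgoal
  · rw [dif_neg hp]
    simp only [Strat.trace, List.append_nil]
    rcases hsub with ⟨x, hx, hxs⟩ | ⟨x, y, hx, hy, hxy, hcl⟩
    · -- the recursive call found the sink of the translated face
      have hwL : (embV S base x, s (embV S base x)) ∈ L := hmemL x hx
      set w := embV S base x with hw
      have hsinkS : ∀ j ∈ S, s w j = false := face_sink S base hxs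
      have hwi : s w i = true := by
        by_contra hfalse
        rw [Bool.not_eq_true] at hfalse
        exact hp ⟨(w, s w), hwL, hsinkS, hfalse⟩
      have hwib : w i = !(u i) := by
        rw [hw, embV_not_mem S base hi]
        exact hbase_i
      have hwu : w ≠ u := by
        intro h
        rw [h] at hwib
        simp at hwib
      refine Or.inr ⟨w, u, List.mem_append_right _ hwL, List.mem_append_left _ hu, hwu, ?_⟩
      intro j hj
      by_cases hjS : j ∈ S
      · rw [hsinkS j hjS, hsu j hjS]
      · by_cases hji : j = i
        · subst hji
          rw [hwi, hui]
        · exfalso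
          apply hj
          rw [hw, embV_not_mem S base hjS, hbase_ne j hji]
    · -- the recursive call found a clash, lift it
      have h1L : (embV S base x, s (embV S base x)) ∈ L := hmemL x hx
      have h2L : (embV S base y, s (embV S base y)) ∈ L := hmemL y hy
      have hne : embV S base x ≠ embV S base y := by
        intro h
        apply hxy
        funext a
        have := congrFun h (sigF S a)
        rwa [embV_sigF, embV_sigF] at this
      refine Or.inr ⟨embV S base x, embV S base y, List.mem_append_right _ h1L,
        List.mem_append_right _ h2L, hne, ?_⟩
      intro j hj
      by_cases hjS : j ∈ S
      · have e1 : embV S base x j = x ((S.orderIsoOfFin rfl).symm ⟨j, hjS⟩) :=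
          embV_mem S base hjS x
        have e2 : embV S base y j = y ((S.orderIsoOfFin rfl).symm ⟨j, hjS⟩) :=
          embV_mem S base hjS y
        have hda : x ((S.orderIsoOfFin rfl).symm ⟨j, hjS⟩) ≠
            y ((S.orderIsoOfFin rfl).symm ⟨j, hjS⟩) := by
          rw [← e1, ← e2]
          exact hj
        have hc := hcl ((S.orderIsoOfFin rfl).symm ⟨j, hjS⟩) hda
        have hc' : s (embV S base x) (sigF S ((S.orderIsoOfFin rfl).symm ⟨j, hjS⟩))
            = s (embV S base y) (sigF S ((S.orderIsoOfFin rfl).symm ⟨j, hjS⟩)) := hc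
        rwa [sigF_inv S hjS] at hc'
      · exfalso
        apply hj
        rw [embV_not_mem S base hjS, embV_not_mem S base hjS]

lemma loop_spec {n : ℕ} (B : ∀ k, List (Vtx k × Vtx k) → Vtx k)
    (hB : ∀ (k : ℕ) (s : Vtx k → Vtx k), FoundSolution s (runAlg s (B k) (tQC k)))
    (s : Vtx n → Vtx n) :
    ∀ (c : ℕ) (S : Finset (Fin n)) (u v : Vtx n) (pre : List (Vtx n × Vtx n)),
      c + S.card + 1 = n →
      (u, s u) ∈ pre → (v, s v) ∈ pre →
      (∀ j ∈ S, s u j = false) → (∀ j ∈ S, s v j = false) →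
      (∀ i, i ∉ S → u i ≠ v i) →
      FoundSolution s (pre ++ (loop B c S u (s u) v (s v)).trace s) := by
  intro c
  induction c with
  | zero =>
    intro S u v pre hcard hu hv hsu hsv hanti
    simp only [loop, Strat.trace, List.append_nil]
    obtain ⟨i0, hi0⟩ := exists_not_mem_of_card_lt (n := n) (S := S) (by omega)
    have huniv : insert i0 S = Finset.univ := by
      apply Finset.eq_univ_of_card
      rw [Finset.card_insert_of_notMem hi0, Fintype.card_fin]
      omega
    have hcover : ∀ j : Fin n, j = i0 ∨ j ∈ S := by
      intro j
      have hj : j ∈ insert i0 S := huniv ▸ Finset.mem_univ j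
      rcases Finset.mem_insert.1 hj with h | h
      exacts [Or.inl h, Or.inr h]
    by_cases hne : s u i0 = s v i0
    · refine Or.inr ⟨u, v, hu, hv, fun h => hanti i0 hi0 (congrFun h i0), ?_⟩
      intro j hj
      rcases hcover j with rfl | hjS
      · exact hne
      · rw [hsu j hjS, hsv j hjS]
    · cases hsui : s u i0 with
      | false =>
        refine Or.inl ⟨u, hu, funext fun j => ?_⟩
        rcases hcover j with rfl | hjS
        exacts [hsui, hsu j hjS]
      | true =>
        have hsvi : s v i0 = false := by
          cases hsvi' : s v i0
          · rfl
          · exact absurd (hsui.trans hsvi'.symm) hne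
        refine Or.inl ⟨v, hv, funext fun j => ?_⟩
        rcases hcover j with rfl | hjS
        exacts [hsvi, hsv j hjS]
  | succ c ih =>
    intro S u v pre hcard hu hv hsu hsv hanti
    simp only [loop]
    by_cases h : ∃ i, i ∉ S ∧ s u i ≠ s v i
    · rw [dif_pos h]
      obtain ⟨hi1, hi2⟩ := h.choose_spec
      by_cases hui : s u h.choose = true
      · rw [if_pos hui]
        have hvi : s v h.choose = false := by
          cases hv' : s v h.choose
          · rfl
          · exact absurd (hui.trans hv'.symm) hi2
        exact body_spec B hB s c ih S h.choose u v pre (by omega) hi1 hu hv hsu hsv hanti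
          hui hvi
      · rw [if_neg hui]
        have hui' : s u h.choose = false := by
          rw [Bool.not_eq_true] at hui
          exact hui
        have hvi : s v h.choose = true := by
          cases hv' : s v h.choose
          · exact absurd (hui'.trans hv'.symm) hi2
          · rfl
        exact body_spec B hB s c ih S h.choose v u pre (by omega) hi1 hv hu hsv hsu
          (fun j hj => (hanti j hj).symm) hvi hui'
    · rw [dif_neg h]
      push_neg at h
      simp only [Strat.trace, List.append_nil]
      obtain ⟨i0, hi0⟩ := exists_not_mem_of_card_lt (n := n) (S := S) (by omega)
      refine Or.inr ⟨u, v, hu, hv, fun hEq => hanti i0 hi0 (congrFun hEq i0), ?_⟩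
      intro j hj
      by_cases hjS : j ∈ S
      · rw [hsu j hjS, hsv j hjS]
      · exact h j hjS

noncomputable def seesaw (n : ℕ) (B : ∀ k, List (Vtx k × Vtx k) → Vtx k) : Strat n :=
  .ask (fun _ => false) fun a0 => .ask (fun _ => true) fun a1 =>
    loop B (n - 1) ∅ (fun _ => false) a0 (fun _ => true) a1

lemma recurrence : ∀ n : ℕ, 1 ≤ n → tQC n ≤ 2 + ∑ k ∈ Finset.range (n - 1), tQC k := by
  intro n hn
  let B : ∀ k, List (Vtx k × Vtx k) → Vtx k := fun k => (tQC_solves k).choose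
  have hB : ∀ (k : ℕ) (s : Vtx k → Vtx k), FoundSolution s (runAlg s (B k) (tQC k)) :=
    fun k => (tQC_solves k).choose_spec
  have hcost : Strat.CostLe (seesaw n B)
      ((∑ j ∈ Finset.range (n - 1), tQC ((∅ : Finset (Fin n)).card + j)) + 1 + 1) := by
    refine .ask _ _ _ (fun a0 => ?_)
    refine .ask _ _ _ (fun a1 => ?_)
    exact loop_cost B (n - 1) ∅ _ a0 _ a1
  have hsolve : ∀ s : Vtx n → Vtx n, FoundSolution s ((seesaw n B).trace s) := by
    intro s
    have htr : (seesaw n B).trace s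
        = [((fun _ => false : Vtx n), s (fun _ => false)),
           ((fun _ => true : Vtx n), s (fun _ => true))]
          ++ (loop B (n - 1) ∅ (fun _ => false) (s (fun _ => false))
              (fun _ => true) (s (fun _ => true))).trace s := rfl
    rw [htr]
    refine loop_spec B hB s (n - 1) ∅ _ _ _ ?_ ?_ ?_ ?_ ?_ ?_
    · simp
      omega
    · simp
    · simp
    · intro j hj
      simp at hj
    · intro j hj
      simp at hj
    · intro i _
      simp
  have hmem : SolvesSinkOrClash n
      ((∑ j ∈ Finset.range (n - 1), tQC ((∅ : Finset (Fin n)).card + j)) + 1 + 1) :=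
    Strat.solves_of_strat hcost hsolve
  have hle := Nat.sInf_le (Set.mem_setOf.2 hmem)
  have hsum : (∑ j ∈ Finset.range (n - 1), tQC ((∅ : Finset (Fin n)).card + j))
      = ∑ k ∈ Finset.range (n - 1), tQC k := by
    simp
  rw [hsum] at hle
  have h2 : ∀ X : ℕ, X + 1 + 1 = 2 + X := fun X => by omega
  rw [h2] at hle
  exact hle

lemma growth : ∀ n : ℕ, (tQC n : ℝ) ≤ 4 * 1.62 ^ n := by
  intro n
  induction n using Nat.strong_induction_on with
  | _ n ih =>
    match n with
    | 0 =>
      have h := tQC_zero_le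
      have : ((tQC 0 : ℕ) : ℝ) ≤ 1 := by exact_mod_cast h
      calc ((tQC 0 : ℕ) : ℝ) ≤ 1 := this
        _ ≤ 4 * 1.62 ^ 0 := by norm_num
    | (m + 1) =>
      have h1 := recurrence (m + 1) (by omega)
      have h1' : tQC (m + 1) ≤ 2 + ∑ k ∈ Finset.range m, tQC k := by simpa using h1
      have h2 : ((tQC (m + 1) : ℕ) : ℝ) ≤ 2 + ∑ k ∈ Finset.range m, ((tQC k : ℕ) : ℝ) := by
        exact_mod_cast h1'
      have h3 : ∑ k ∈ Finset.range m, ((tQC k : ℕ) : ℝ)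
          ≤ ∑ k ∈ Finset.range m, 4 * 1.62 ^ k :=
        Finset.sum_le_sum (fun k hk => ih k (by
          have := Finset.mem_range.1 hk
          omega))
      have h4 : ∑ k ∈ Finset.range m, (1.62 : ℝ) ^ k = (1.62 ^ m - 1) / (1.62 - 1) :=
        geom_sum_eq (by norm_num) m
      have h5 : ∑ k ∈ Finset.range m, (4 : ℝ) * 1.62 ^ k = 4 * ((1.62 ^ m - 1) / 0.62) := by
        rw [← Finset.mul_sum, h4]
        norm_num
      have hpow : (0 : ℝ) < 1.62 ^ m := pow_pos (by norm_num) m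
      have hsucc : (1.62 : ℝ) ^ (m + 1) = 1.62 ^ m * 1.62 := pow_succ _ _
      calc ((tQC (m + 1) : ℕ) : ℝ)
          ≤ 2 + ∑ k ∈ Finset.range m, ((tQC k : ℕ) : ℝ) := h2
        _ ≤ 2 + ∑ k ∈ Finset.range m, 4 * 1.62 ^ k := by linarith
        _ = 2 + 4 * ((1.62 ^ m - 1) / 0.62) := by rw [h5]
        _ ≤ 4 * 1.62 ^ (m + 1) := by
            rw [hsucc]
            have hkey : (4 : ℝ) * ((1.62 ^ m - 1) / 0.62)
                = (4 / 0.62) * 1.62 ^ m - 4 / 0.62 := by ring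
            rw [hkey]
            nlinarith [hpow, show (0:ℝ) ≤ 6.48 - 4 / 0.62 from by norm_num,
              show (2:ℝ) ≤ 4 / 0.62 from by norm_num]


/-- Fibonacci seesaw recurrence: `t(n) ≤ 2 + ∑_{k=0}^{n−2} t(k)` for `n ≥ 1`;
consequently `t(n) ∈ O(1.62^n)`. -/
theorem stmt10 :
    (∀ n : ℕ, 1 ≤ n → tQC n ≤ 2 + ∑ k ∈ Finset.range (n - 1), tQC k) ∧
    (∃ C : ℝ, 0 < C ∧ ∀ n : ℕ, (tQC n : ℝ) ≤ C * 1.62 ^ n) := by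
  exact ⟨recurrence, ⟨4, by norm_num, growth⟩⟩
end

section
/- There are no 3-certificates: if a partial outmap assigns values to exactly three vertices of the n-hypercube, no two of which clash, then it is completable to a USO. -/
/-- `s` is the outmap of a unique sink orientation (Szabó–Welzl criterion). -/
def IsUSO {ι : Type*} (s : (ι → Bool) → (ι → Bool)) : Prop :=
  ∀ u v : ι → Bool, u ≠ v → ∃ i, u i ≠ v i ∧ s u i ≠ s v i

/-- The set of known vertices of a partial outmap. -/
def Known {n : ℕ} (s : (Fin n → Bool) → Option (Fin n → Bool)) :
    Finset (Fin n → Bool) :=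
  Finset.univ.filter (fun u => (s u).isSome)

/-- A partial outmap is completable if some USO outmap agrees with it on all
known vertices. -/
def Completable {n : ℕ} (s : (Fin n → Bool) → Option (Fin n → Bool)) : Prop :=
  ∃ t : (Fin n → Bool) → (Fin n → Bool), IsUSO t ∧ ∀ u a, s u = some a → t u = a

/-- Two known vertices of a partial outmap clash. -/
def ClashAt {n : ℕ} (s : (Fin n → Bool) → Option (Fin n → Bool))
    (u v : Fin n → Bool) : Prop :=
  u ≠ v ∧ ∃ a b, s u = some a ∧ s v = some b ∧ ∀ i, u i ≠ v i → a i = b i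

/-- Restriction of a partial outmap to a subset `P` of its known vertices. -/
def restrictPO {n : ℕ} (s : (Fin n → Bool) → Option (Fin n → Bool))
    (P : Finset (Fin n → Bool)) : (Fin n → Bool) → Option (Fin n → Bool) :=
  fun u => if u ∈ P then s u else none

/-- A `k`-certificate: a non-completable partial outmap with `k` known
vertices all of whose proper restrictions are completable. -/
def IsCertificate {n : ℕ} (k : ℕ)
    (s : (Fin n → Bool) → Option (Fin n → Bool)) : Prop :=
  (Known s).card = k ∧ ¬ Completable s ∧
    ∀ P ⊂ Known s, Completable (restrictPO s P)

/-!
Record a USO by its edge directions `o x = t x xor x`; then two prescribed vertices are compatible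
exactly when some coordinate separating them carries equal directions at both. If a coordinate `p`
on which the three prescribed direction vectors agree separates one vertex from the other two, comb
along `p`: that vertex's facet is oriented uniformly, and the other facet is combed once more along
a coordinate separating the remaining two vertices. Otherwise the three separating coordinates
`p, q, r` are distinct and the directions on them form a cyclic pattern; a fixed 3-dimensional USO on
`p, q, r`, with a uniform orientation on each fibre, then realises all three vectors.
-/

/-- `o x i = true` iff the edge at `x` in direction `i` points towards the vertex whose `i`-th
coordinate is `true`; the outmap is `fun x i => xor (o x i) (x i)`. -/
def IsUSOOrient {ι : Type*} (o : (ι → Bool) → (ι → Bool)) : Prop :=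
  ∀ x y : ι → Bool, x ≠ y → ∃ i, x i ≠ y i ∧ o x i = o y i

section Orient

variable {ι : Type*}

theorem IsUSOOrient.isUSO {o : (ι → Bool) → (ι → Bool)} (ho : IsUSOOrient o) :
    IsUSO fun x i => xor (o x i) (x i) := by
  intro x y hxy
  obtain ⟨i, hi, he⟩ := ho x y hxy
  exact ⟨i, hi, by simpa [he] using hi⟩

theorem isUSOOrient_const (c : ι → Bool) : IsUSOOrient fun _ => c := by
  intro x y hxy
  obtain ⟨i, hi⟩ := Function.ne_iff.mp hxy
  exact ⟨i, hi, rfl⟩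

theorem IsUSOOrient.xor_left {o : (ι → Bool) → (ι → Bool)} (ho : IsUSOOrient o)
    (a : ι → Bool) : IsUSOOrient fun x i => xor (a i) (o x i) := by
  intro x y hxy
  obtain ⟨i, hi, he⟩ := ho x y hxy
  exact ⟨i, hi, congrArg (xor (a i)) he⟩

theorem IsUSOOrient.comb {o₀ o₁ : (ι → Bool) → (ι → Bool)} (h₀ : IsUSOOrient o₀)
    (h₁ : IsUSOOrient o₁) (p : ι) (b : Bool) (hp : ∀ x y, o₀ x p = o₁ y p) :
    IsUSOOrient fun x => if x p = b then o₀ x else o₁ x := by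
  intro x y hxy
  by_cases hx : x p = b <;> by_cases hy : y p = b <;> simp only [hx, hy, if_true, if_false]
  · exact h₀ x y hxy
  · exact ⟨p, by rwa [hx, ne_comm], hp x y⟩
  · exact ⟨p, by rwa [hy], (hp y x).symm⟩
  · exact h₁ x y hxy

theorem IsUSOOrient.comp_restrict {κ : Type*} {F : (κ → Bool) → ι → Bool} (π : κ → ι)
    (hF : IsUSOOrient fun y k => F y (π k)) (c : κ → Bool) :
    IsUSOOrient fun x => F fun k => xor (x (π k)) (c k) := by
  intro x x' hxx'
  by_cases hy : (fun k => xor (x (π k)) (c k)) = fun k => xor (x' (π k)) (c k)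
  · obtain ⟨i, hi⟩ := Function.ne_iff.mp hxx'
    exact ⟨i, hi, by simp only [hy]⟩
  · obtain ⟨k, hk, he⟩ := hF _ _ hy
    exact ⟨π k, fun h => hk (by simp only [h]), he⟩

end Orient

/- A 3-dimensional USO that is constant on four regions, with directions the rows of
`threeCubeTable`. Regions `0, 1, 2` receive `u, v, w` in the cyclic case: any two of their rows agree
on a single coordinate, and that coordinate separates the two regions. -/
def threeCubeRegion (y : Fin 3 → Bool) : Fin 4 :=
  if !y 0 && !y 1 then 0 else if y 0 && !y 2 then 1 else if y 1 && y 2 then 2 else 3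

def threeCubeTable : Fin 4 → Fin 3 → Bool :=
  ![![false, false, false], ![false, true, true], ![true, false, true], ![false, false, true]]

theorem isUSOOrient_threeCube : IsUSOOrient fun y => threeCubeTable (threeCubeRegion y) := by
  unfold IsUSOOrient; decide

section Three

variable {ι : Type*} (u v w α β γ : ι → Bool)

theorem exists_isUSOOrient_of_isolated (p : ι) (hv : u p ≠ v p) (hw : u p ≠ w p)
    (hαβ : α p = β p) (hβγ : β p = γ p) (hvw : ∃ r, v r ≠ w r ∧ β r = γ r) :
    ∃ o, IsUSOOrient o ∧ o u = α ∧ o v = β ∧ o w = γ := by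
  obtain ⟨r, hr, hβγr⟩ := hvw
  have hfacet := (isUSOOrient_const β).comb (isUSOOrient_const γ) r (v r) fun _ _ => hβγr
  refine ⟨_, (isUSOOrient_const α).comb hfacet p (u p) fun _ y => ?_, ?_, ?_, ?_⟩
  · split <;> simp [hαβ, hβγ]
  · simp
  · simp [Ne.symm hv]
  · simp [Ne.symm hw, Ne.symm hr]

theorem exists_isUSOOrient_of_cyclic [DecidableEq ι] (p q r : ι)
    (hp : u p ≠ v p) (hαβ : α p = β p) (hγp : γ p = !α p)
    (hq : u q ≠ w q) (hαγ : α q = γ q) (hβq : β q = !α q)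
    (hr : v r ≠ w r) (hβγ : β r = γ r) (hβr : β r = !α r) :
    ∃ o, IsUSOOrient o ∧ o u = α ∧ o v = β ∧ o w = γ := by
  have hpr : p ≠ r := by rintro rfl; simp [hαβ] at hβr
  have hqr : q ≠ r := by rintro rfl; simp [hβγ, hαγ] at hβq
  set V : Fin 4 → ι → Bool := ![α, β, γ, Function.update α r (!α r)]
  have hV : ∀ j k, V j (![p, q, r] k) = xor (α (![p, q, r] k)) (threeCubeTable j k) := by
    intro j k
    fin_cases j <;> fin_cases k <;>
      simp [V, threeCubeTable, hpr, hqr, hαβ, hγp, hαγ, hβq, ← hβγ, hβr]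
  have hF : IsUSOOrient fun y k => V (threeCubeRegion y) (![p, q, r] k) := by
    simp only [hV]
    exact isUSOOrient_threeCube.xor_left _
  refine ⟨_, hF.comp_restrict _ ![u p, u q, v r], ?_, ?_, ?_⟩
  · simp [threeCubeRegion, V]
  · simp [threeCubeRegion, V, Ne.symm hp]
  · simp [threeCubeRegion, V, Ne.symm hq, Ne.symm hr]


theorem exists_isUSOOrient_of_pairwise [DecidableEq ι]
    (huv : ∃ i, u i ≠ v i ∧ α i = β i) (huw : ∃ i, u i ≠ w i ∧ α i = γ i)
    (hvw : ∃ i, v i ≠ w i ∧ β i = γ i) :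
    ∃ o, IsUSOOrient o ∧ o u = α ∧ o v = β ∧ o w = γ := by
  by_cases hcomb : ∃ p, α p = β p ∧ β p = γ p ∧ ¬(u p = v p ∧ v p = w p)
  · obtain ⟨p, hαβ, hβγ, hp⟩ := hcomb
    have odd_one_out : ∀ a b c : Bool, ¬(a = b ∧ b = c) →
        (a ≠ b ∧ a ≠ c) ∨ (b ≠ a ∧ b ≠ c) ∨ (c ≠ a ∧ c ≠ b) := by decide
    rcases odd_one_out _ _ _ hp with ⟨hv, hw⟩ | ⟨hu, hw⟩ | ⟨hu, hv⟩
    · exact exists_isUSOOrient_of_isolated u v w α β γ p hv hw hαβ hβγ hvw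
    · obtain ⟨o, ho, hov, hou, how⟩ :=
        exists_isUSOOrient_of_isolated v u w β α γ p hu hw hαβ.symm (hαβ.trans hβγ) huw
      exact ⟨o, ho, hou, hov, how⟩
    · obtain ⟨o, ho, how, hou, hov⟩ :=
        exists_isUSOOrient_of_isolated w u v γ α β p hu hv (hαβ.trans hβγ).symm hαβ huv
      exact ⟨o, ho, hou, hov, how⟩
  · push Not at hcomb
    obtain ⟨p, hp, hαβ⟩ := huv
    obtain ⟨q, hq, hαγ⟩ := huw
    obtain ⟨r, hr, hβγ⟩ := hvw
    refine exists_isUSOOrient_of_cyclic u v w α β γ p q r hp hαβ ?_ hq hαγ ?_ hr hβγ ?_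
    · exact Bool.eq_not_iff.mpr fun h => hp (hcomb p hαβ (hαβ.symm.trans h.symm)).1
    · exact Bool.eq_not_iff.mpr fun h => hq ((hcomb q h.symm (h.trans hαγ)).elim Eq.trans)
    · exact Bool.eq_not_iff.mpr fun h => hr (hcomb r h.symm hβγ).2

theorem exists_isUSO_of_pairwise [DecidableEq ι] (a b c : ι → Bool)
    (huv : ∃ i, u i ≠ v i ∧ a i ≠ b i) (huw : ∃ i, u i ≠ w i ∧ a i ≠ c i)
    (hvw : ∃ i, v i ≠ w i ∧ b i ≠ c i) :
    ∃ t, IsUSO t ∧ t u = a ∧ t v = b ∧ t w = c := by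
  have xor_eq_xor : ∀ a b c d : Bool, a ≠ b → c ≠ d → xor a c = xor b d := by decide
  have xor_eq : ∀ {x y d e : ι → Bool}, (∃ i, x i ≠ y i ∧ d i ≠ e i) →
      ∃ i, x i ≠ y i ∧ xor (d i) (x i) = xor (e i) (y i) :=
    fun ⟨i, hxy, hde⟩ => ⟨i, hxy, xor_eq_xor _ _ _ _ hde hxy⟩
  obtain ⟨o, ho, hou, hov, how⟩ := exists_isUSOOrient_of_pairwise u v w
    (fun i => xor (a i) (u i)) (fun i => xor (b i) (v i)) (fun i => xor (c i) (w i))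
    (xor_eq huv) (xor_eq huw) (xor_eq hvw)
  exact ⟨_, ho.isUSO, by simp [hou], by simp [hov], by simp [how]⟩

end Three

section Known

variable {n : ℕ} {s : (Fin n → Bool) → Option (Fin n → Bool)}

theorem mem_known_iff {u : Fin n → Bool} : u ∈ Known s ↔ ∃ a, s u = some a := by
  simp [Known, Option.isSome_iff_exists]

theorem exists_ne_ne_of_not_clashAt {u v a b : Fin n → Bool} (hu : s u = some a)
    (hv : s v = some b) (huv : u ≠ v) (h : ¬ClashAt s u v) : ∃ i, u i ≠ v i ∧ a i ≠ b i := by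
  by_contra! hall
  exact h ⟨huv, a, b, hu, hv, hall⟩

end Known

/-- There are no 3-certificates: a partial outmap with exactly three known,
pairwise non-clashing vertices is completable. -/
theorem stmt16 (n : ℕ) (s : (Fin n → Bool) → Option (Fin n → Bool))
    (h3 : (Known s).card = 3)
    (hnc : ∀ u ∈ Known s, ∀ v ∈ Known s, u ≠ v → ¬ ClashAt s u v) :
    Completable s := by
  obtain ⟨u, v, w, huv, huw, hvw, hK⟩ := Finset.card_eq_three.mp h3
  have hmem : ∀ x, x ∈ Known s ↔ x = u ∨ x = v ∨ x = w := by simp [hK]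
  obtain ⟨a, ha⟩ := mem_known_iff.mp ((hmem u).mpr (by simp))
  obtain ⟨b, hb⟩ := mem_known_iff.mp ((hmem v).mpr (by simp))
  obtain ⟨c, hc⟩ := mem_known_iff.mp ((hmem w).mpr (by simp))
  have hsep : ∀ {x y d e}, s x = some d → s y = some e → x ≠ y → ∃ i, x i ≠ y i ∧ d i ≠ e i :=
    fun hx hy hxy => exists_ne_ne_of_not_clashAt hx hy hxy
      (hnc _ (mem_known_iff.mpr ⟨_, hx⟩) _ (mem_known_iff.mpr ⟨_, hy⟩) hxy)
  obtain ⟨t, ht, htu, htv, htw⟩ :=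
    exists_isUSO_of_pairwise u v w a b c (hsep ha hb huv) (hsep ha hc huw) (hsep hb hc hvw)
  refine ⟨t, ht, fun x d hx => ?_⟩
  rcases (hmem x).mp (mem_known_iff.mpr ⟨d, hx⟩) with rfl | rfl | rfl
  · exact htu.trans (Option.some.inj (ha.symm.trans hx))
  · exact htv.trans (Option.some.inj (hb.symm.trans hx))
  · exact htw.trans (Option.some.inj (hc.symm.trans hx))
end

section
/- Extension lemma: Let s be a partial outmap, and u, v distinct known vertices that do not clash, and i a dimension with (s(u) XOR s(v)) AND (u XOR v) ≠ e_i. Then u XOR e_i ≠ v, and if s is extended by setting s(u XOR e_i) = s(u) XOR e_i, the vertices u XOR e_i and v do not clash. -/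
/-- Flip coordinate `i` of a vertex/bitstring. -/
def flipV {n : ℕ} (u : Fin n → Bool) (i : Fin n) : Fin n → Bool :=
  fun j => if j = i then !u j else u j

theorem flipV_apply_of_ne {n : ℕ} (u : Fin n → Bool) {i j : Fin n} (hji : j ≠ i) :
    flipV u i j = u j :=
  if_neg hji

theorem exists_ne_of_exists_of_not_forall_iff_eq {α : Type*} {P : α → Prop} {i : α}
    (hex : ∃ j, P j) (hne : ¬ ∀ j, P j ↔ j = i) : ∃ j ≠ i, P j := by
  by_contra! hP
  obtain ⟨k, hk⟩ := hex
  have hki : k = i := by_contra fun hki => hP k hki hk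
  refine hne fun j => ⟨fun hj => ?_, fun hji => hji ▸ hki ▸ hk⟩
  by_contra hji
  exact hP j hji hj

/- A coordinate `j ≠ i` on which `u, v` and `a, b` both differ is untouched by flipping `i`,
so it still separates `u ⊕ e_i` from `v`; the hypotheses say exactly that such a `j` exists. -/
/-- Extension lemma: if known vertices `u, v` with outmap values `a, b` do not
clash and `(a ⊕ b) ∧ (u ⊕ v) ≠ e_i`, then `u ⊕ e_i ≠ v`, and extending the
partial outmap by `s(u ⊕ e_i) = a ⊕ e_i` creates no clash between `u ⊕ e_i`
and `v`. -/
theorem stmt18 (n : ℕ) (u v a b : Fin n → Bool) (i : Fin n)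
    (hnoclash : ∃ j, u j ≠ v j ∧ a j ≠ b j)
    (hnei : ¬ ∀ j, ((u j ≠ v j ∧ a j ≠ b j) ↔ j = i)) :
    flipV u i ≠ v ∧ ∃ j, flipV u i j ≠ v j ∧ flipV a i j ≠ b j := by
  obtain ⟨j, hji, huv, hab⟩ := exists_ne_of_exists_of_not_forall_iff_eq hnoclash hnei
  rw [← flipV_apply_of_ne u hji] at huv
  rw [← flipV_apply_of_ne a hji] at hab
  exact ⟨fun h => huv (congrFun h j), j, huv, hab⟩
end
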